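/- arXiv:1004.4949 — 2 statements merged into one kernel-verified Lean document; each statement's English description precedes it below -/
import Mathlib

section
/- Let m be a positive integer, F = GF(2^m), t ≥ 1, and a ∈ F. Then for every binary m-tuple f (identified with the field element f = Σ_{j=0}^{m-1} f_j ξ^j), one has f P^t(a) fᵀ ≡ 2·Tr(f^{2^t+1}·a) + 2·z_a fᵀ (mod 4), where z_a is the binary m-tuple with j-th coordinate Tr(ξ^{j(2^t+1)}·a) for j = 0, ..., m−1, the trace values 0/1 are lifted to ℤ₄, and f P^t(a) fᵀ is evaluated in ℤ₄. -/
noncomputable section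

namespace DGPaper

/-- The absolute trace `GF(2^m) → 𝔽₂`. -/
def tr {m : ℕ} (x : GaloisField 2 m) : ZMod 2 :=
  Algebra.trace (ZMod 2) (GaloisField 2 m) x

/-- Lift a bit to `ℤ₄`. -/
def lift2 (v : ZMod 2) : ZMod 4 := (v.val : ZMod 4)

/-- `i^v` for `v ∈ ℤ₄`. -/
def zeta (v : ZMod 4) : ℂ := Complex.I ^ v.val

/-- The field element of `GF(2^m)` associated to a binary `m`-tuple via the basis
`1, ξ, …, ξ^{m-1}`. -/
def fld {m : ℕ} (ξ : GaloisField 2 m) (x : Fin m → ZMod 2) : GaloisField 2 m :=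
  ∑ j : Fin m, x j • ξ ^ (j : ℕ)

/-- The binary symmetric matrix `P^t(a)`: for `t = 0` it represents the bilinear form
`(x,y) ↦ Tr(x y a)`, and for `t ≥ 1` the (zero-diagonal) form
`(x,y) ↦ Tr((x y^{2^t} + x^{2^t} y) a)`, in the basis `1, ξ, …, ξ^{m-1}` of `GF(2^m)`
over `𝔽₂`. -/
def Pmat {m : ℕ} (ξ : GaloisField 2 m) (t : ℕ) (a : GaloisField 2 m) :
    Matrix (Fin m) (Fin m) (ZMod 2) :=
  Matrix.of fun i j =>
    if t = 0 then tr (ξ ^ (i : ℕ) * ξ ^ (j : ℕ) * a)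
    else tr ((ξ ^ (i : ℕ) * (ξ ^ (j : ℕ)) ^ (2 ^ t) + (ξ ^ (i : ℕ)) ^ (2 ^ t) * ξ ^ (j : ℕ)) * a)

/-- The quadratic form `x P xᵀ` evaluated in `ℤ₄` (the `0/1` entries of `P` and `x`
being lifted to `ℤ₄`). -/
def qform {m : ℕ} (P : Matrix (Fin m) (Fin m) (ZMod 2)) (x : Fin m → ZMod 2) : ZMod 4 :=
  ∑ i : Fin m, ∑ j : Fin m, lift2 (x i) * lift2 (P i j) * lift2 (x j)

instance {m : ℕ} : Fintype (GaloisField 2 m) := Fintype.ofFinite _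

/-! Auxiliary lemmas. -/

lemma lift2_mul (x y : ZMod 2) : lift2 (x * y) = lift2 x * lift2 y := by revert x y; decide

/-- `x ↦ 2 * lift2 x` is additive. -/
def gg : ZMod 2 →+ ZMod 4 where
  toFun x := 2 * lift2 x
  map_zero' := by decide
  map_add' := by decide

lemma gg_inj : Function.Injective gg := by decide

open Finset in
lemma swap_sum {M : Type*} [AddCommMonoid M] {m : ℕ} (T : Fin m → Fin m → M) :
    ∑ i, ∑ j ∈ univ.filter (· < i), T i j
      = ∑ i, ∑ j ∈ univ.filter (i < ·), T j i := by
  rw [Finset.sum_comm' (t' := univ) (s' := fun j => univ.filter (j < ·))]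
  intro x y
  simp [Finset.mem_filter]

open Finset in
lemma split_sum {M : Type*} [AddCommMonoid M] {m : ℕ} (T : Fin m → Fin m → M) :
    ∑ i, ∑ j, T i j
      = (∑ i, ∑ j ∈ univ.filter (i < ·), (T i j + T j i)) + ∑ i, T i i := by
  have h1 : ∀ i : Fin m, ∑ j, T i j
      = (∑ j ∈ univ.filter (i < ·), T i j) + ((∑ j ∈ univ.filter (· < i), T i j) + T i i) := by
    intro i
    rw [← Finset.sum_filter_add_sum_filter_not univ (i < ·) (T i)]
    congr 1
    rw [← Finset.sum_filter_add_sum_filter_not (univ.filter (¬ i < ·)) (· < i) (T i)]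
    congr 1
    · rw [Finset.filter_filter]
      congr 1
      ext j
      simp only [Finset.mem_filter, Finset.mem_univ, true_and]
      omega
    · rw [Finset.filter_filter]
      have : (univ.filter fun j => ¬ i < j ∧ ¬ j < i) = {i} := by
        ext j
        simp only [Finset.mem_filter, Finset.mem_univ, true_and, Finset.mem_singleton]
        omega
      rw [this, Finset.sum_singleton]
  simp_rw [h1, Finset.sum_add_distrib]
  rw [swap_sum]
  abel

lemma gg_mul (x y : ZMod 2) : gg (x * y) = 2 * (lift2 x * lift2 y) := by
  revert x y; decide

lemma gg_mul3 (x y z : ZMod 2) :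
    gg (x * y * z) = lift2 x * lift2 y * lift2 z + lift2 z * lift2 y * lift2 x := by
  revert x y z; decide

/-- For `t ≥ 1`, `a ∈ GF(2^m)` and every binary `m`-tuple `f`
(identified with the field element `f = ∑_j f_j ξ^j`), the quadratic form satisfies
`f P^t(a) fᵀ ≡ 2 Tr(f^{2^t+1} a) + 2 z_a fᵀ (mod 4)`, where `z_a` is the binary
`m`-tuple with `j`-th coordinate `Tr(ξ^{j(2^t+1)} a)` and the trace values are lifted
to `ℤ₄`. -/
theorem dg_quadratic_form_eq_trace_plus_linear
    (m t : ℕ) (hm : 0 < m) (ht : 1 ≤ t)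
    (ξ : GaloisField 2 m)
    (hξ : LinearIndependent (ZMod 2) fun j : Fin m => ξ ^ (j : ℕ))
    (a : GaloisField 2 m) (f : Fin m → ZMod 2) :
    qform (Pmat ξ t a) f =
      2 * lift2 (tr (fld ξ f ^ (2 ^ t + 1) * a)) +
        2 * ∑ j : Fin m,
          lift2 (tr (ξ ^ ((j : ℕ) * (2 ^ t + 1)) * a)) * lift2 (f j) := by
  classical
  have ht0 : t ≠ 0 := by omega
  set b : Fin m → Fin m → ZMod 2 :=
    fun i j => tr (ξ ^ (i : ℕ) * (ξ ^ (j : ℕ)) ^ (2 ^ t) * a) with hb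
  have hP : ∀ i j, Pmat ξ t a i j = b i j + b j i := by
    intro i j
    simp only [Pmat, Matrix.of_apply, if_neg ht0, hb, tr]
    rw [add_mul, map_add]
    congr 2
    ring
  set B : Fin m → Fin m → ZMod 2 := fun i j => f i * b i j * f j with hB
  -- LHS as gg of a mod-2 sum
  have hqf : qform (Pmat ξ t a) f
      = gg (∑ i, ∑ j ∈ Finset.univ.filter (i < ·), (f i * Pmat ξ t a i j * f j)) := by
    rw [map_sum]
    unfold qform
    rw [split_sum (fun i j => lift2 (f i) * lift2 (Pmat ξ t a i j) * lift2 (f j))]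
    have hdiag : ∀ i, lift2 (f i) * lift2 (Pmat ξ t a i i) * lift2 (f i) = 0 := by
      intro i
      have h0 : Pmat ξ t a i i = 0 := by rw [hP]; exact CharTwo.add_self_eq_zero _
      have h1 : lift2 (0 : ZMod 2) = 0 := rfl
      rw [h0, h1, mul_zero, zero_mul]
    simp_rw [hdiag, Finset.sum_const_zero, add_zero, map_sum]
    refine Finset.sum_congr rfl fun i _ => Finset.sum_congr rfl fun j _ => ?_
    have hsym : Pmat ξ t a j i = Pmat ξ t a i j := by rw [hP, hP]; ring
    rw [hsym, gg_mul3]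
  rw [hqf]
  -- RHS as gg of a mod-2 sum
  have hlin : (2 : ZMod 4) * ∑ j : Fin m,
      lift2 (tr (ξ ^ ((j : ℕ) * (2 ^ t + 1)) * a)) * lift2 (f j)
      = gg (∑ j : Fin m, tr (ξ ^ ((j : ℕ) * (2 ^ t + 1)) * a) * f j) := by
    rw [map_sum, Finset.mul_sum]
    exact Finset.sum_congr rfl fun j _ => (gg_mul _ _).symm
  have hrhs : (2 : ZMod 4) * lift2 (tr (fld ξ f ^ (2 ^ t + 1) * a)) +
        2 * ∑ j : Fin m, lift2 (tr (ξ ^ ((j : ℕ) * (2 ^ t + 1)) * a)) * lift2 (f j)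
      = gg (tr (fld ξ f ^ (2 ^ t + 1) * a)
          + ∑ j : Fin m, tr (ξ ^ ((j : ℕ) * (2 ^ t + 1)) * a) * f j) := by
    rw [map_add, hlin]
    rfl
  rw [hrhs]
  congr 1
  -- now a pure ZMod 2 identity
  have frob : ∀ (c : ZMod 2) (x : GaloisField 2 m),
      (c • x) ^ (2 ^ t) = c • x ^ (2 ^ t) := by
    intro c x
    have hc : c = 0 ∨ c = 1 := by revert c; decide
    rcases hc with h | h <;> subst h
    · rw [zero_smul, zero_smul, zero_pow (by positivity : (2:ℕ) ^ t ≠ 0)]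
    · rw [one_smul, one_smul]
  have hfldpow : fld ξ f ^ (2 ^ t) = ∑ j : Fin m, f j • (ξ ^ (j : ℕ)) ^ (2 ^ t) := by
    unfold fld
    rw [sum_pow_char_pow 2 t]
    exact Finset.sum_congr rfl fun j _ => frob _ _
  have htr : tr (fld ξ f ^ (2 ^ t + 1) * a) = ∑ i, ∑ j, B i j := by
    have key : fld ξ f ^ (2 ^ t + 1) * a
        = ∑ i : Fin m, ∑ j : Fin m,
            (f i * f j) • (ξ ^ (i:ℕ) * (ξ ^ (j:ℕ)) ^ (2 ^ t) * a) := by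
      rw [pow_add, pow_one, hfldpow]
      unfold fld
      rw [Finset.sum_mul_sum, Finset.sum_mul]
      rw [Finset.sum_comm]
      refine Finset.sum_congr rfl fun i _ => ?_
      rw [Finset.sum_mul]
      refine Finset.sum_congr rfl fun j _ => ?_
      rw [smul_mul_smul_comm, smul_mul_assoc, mul_comm (f j) (f i)]
      congr 1
      ring
    rw [key]
    unfold tr
    rw [map_sum]
    refine Finset.sum_congr rfl fun i _ => ?_
    rw [map_sum]
    refine Finset.sum_congr rfl fun j _ => ?_
    rw [LinearMap.map_smul, smul_eq_mul]
    simp only [hB, hb, tr]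
    ring
  have hz : ∀ j : Fin m, tr (ξ ^ ((j : ℕ) * (2 ^ t + 1)) * a) = b j j := by
    intro j
    rw [hb]
    congr 2
    rw [← pow_mul, ← pow_add]
    ring_nf
  have hsq : ∀ c : ZMod 2, c * c = c := by decide
  have hBdiag : ∀ j, B j j = b j j * f j := by
    intro j
    show f j * b j j * f j = b j j * f j
    rw [mul_comm (f j) (b j j), mul_assoc, hsq]
  have hterm : ∀ i j, f i * Pmat ξ t a i j * f j = B i j + B j i := by
    intro i j
    show f i * Pmat ξ t a i j * f j = f i * b i j * f j + f j * b j i * f i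
    rw [hP]
    ring
  simp_rw [hterm, htr, hz, ← hBdiag]
  have hsplit := split_sum B
  have hfin : (∑ i, ∑ j ∈ Finset.univ.filter (i < ·), (B i j + B j i))
      = (∑ i, ∑ j, B i j) - ∑ i, B i i := by
    rw [hsplit]; ring
  rw [hfin, CharTwo.sub_eq_add]
end DGPaper
end
end

section
/- Let m be an odd positive integer, F = GF(2^m), and let a ∈ F be nonzero. Define the weight w_a = #{x ∈ {0,1}^m : x P¹(a) xᵀ ≡ 2 (mod 4)}, where the quadratic form is evaluated in ℤ₄. Then w_a ∈ {2^{m-1} − 2^{(m-1)/2}, 2^{m-1}, 2^{m-1} + 2^{(m-1)/2}}; equivalently, S_a = Σ_{x ∈ {0,1}^m} i^{x P¹(a) xᵀ} satisfies S_a² ∈ {0, 2^{m+1}}. -/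
noncomputable section

namespace DGPaper

/-!
`P = P¹(a)` is symmetric with zero diagonal, so `Q(x) = x P xᵀ` takes values in `{0, 2} ⊆ ℤ₄` and
`Q(x + z) = Q(x) + Q(z) + 2 (x P zᵀ)`. Substituting `y = x + z` in `S_a² = ∑_{x,y} i^{Q(x) + Q(y)}`
and using orthogonality of the characters `x ↦ (-1)^{x P zᵀ}` gives
`S_a² = 2^m ∑_{z ∈ ker P} i^{Q(z)}`. For `w = ∑ z_j ξ^j`, `z ∈ ker P` says that
`x ↦ Tr((x w² + x² w) a) = Tr(x (w² a + √(w a)))` vanishes, i.e. `(w² a)² = w a`, i.e. `w = 0` or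
`w³ = a⁻¹`. For odd `m`, `3 ∤ 2^m - 1`, so cubing is bijective on `GF(2^m)ˣ` and `ker P = {0, v₀}`;
hence `S_a² = 2^m (1 ± 1)`. Finally `S_a = 2^m - 2 w_a`.
-/

open Matrix

lemma zeta_add (u v : ZMod 4) : zeta (u + v) = zeta u * zeta v :=
  AddChar.map_add_eq_mul (AddChar.zmodChar 4 Complex.I_pow_four) u v

lemma zeta_zero : zeta 0 = 1 := by simp [zeta]

lemma zeta_two : zeta 2 = -1 := Complex.I_sq

def twoMulLift : ZMod 2 →+ ZMod 4 := AddMonoidHom.mk' (fun u => 2 * lift2 u) (by decide)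

lemma zeta_twoMulLift_eq_one_iff (u : ZMod 2) : zeta (twoMulLift u) = 1 ↔ u = 0 := by
  obtain rfl | rfl : u = 0 ∨ u = 1 := by revert u; decide
  · simp [zeta_zero]
  · rw [show twoMulLift 1 = 2 from rfl, zeta_two]; norm_num

lemma sum_sum_eq_zero_of_add_swap {ι M : Type*} [Fintype ι] [AddCommMonoid M] (f : ι → ι → M)
    (hswap : ∀ i j, f i j + f j i = 0) (hdiag : ∀ i, f i i = 0) : ∑ i, ∑ j, f i j = 0 := by
  rw [← Finset.sum_product']
  refine Finset.sum_ninvolution Prod.swap (fun p => hswap p.1 p.2) (fun p hp hswap => ?_)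
    (fun p => Finset.mem_univ _) Prod.swap_swap
  obtain ⟨i, j⟩ := p
  obtain rfl : j = i := congrArg Prod.fst hswap
  exact hp (hdiag j)

section AddChar

variable {ι : Type*} [Fintype ι]

def dotProductChar (w : ι → ZMod 2) : AddChar (ι → ZMod 2) ℂ :=
  (AddChar.zmodChar 4 Complex.I_pow_four).compAddMonoidHom
    (twoMulLift.comp (AddMonoidHom.mk' (· ⬝ᵥ w) fun x y => add_dotProduct x y w))

lemma dotProductChar_apply (w x : ι → ZMod 2) : dotProductChar w x = zeta (twoMulLift (x ⬝ᵥ w)) :=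
  rfl

lemma dotProductChar_eq_zero_iff (w : ι → ZMod 2) : dotProductChar w = 0 ↔ w = 0 := by
  simp only [AddChar.eq_zero_iff, dotProductChar_apply, zeta_twoMulLift_eq_one_iff,
    dotProduct_comm _ w, dotProduct_eq_zero_iff]

lemma sum_zeta_twoMulLift_dotProduct [DecidableEq ι] (w : ι → ZMod 2) :
    ∑ x, zeta (twoMulLift (x ⬝ᵥ w)) = if w = 0 then 2 ^ Fintype.card ι else 0 := by
  simp [← dotProductChar_apply, AddChar.sum_eq_ite, dotProductChar_eq_zero_iff]

end AddChar

lemma dotProduct_mulVec_self_eq_zero {ι R : Type*} [Fintype ι] [CommRing R] [CharP R 2]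
    {A : Matrix ι ι R} (hs : A.IsSymm) (hd : ∀ i, A i i = 0) (x : ι → R) :
    x ⬝ᵥ (A *ᵥ x) = 0 := by
  simp only [dotProduct, mulVec, Finset.mul_sum]
  refine sum_sum_eq_zero_of_add_swap _ (fun i j => ?_) fun i => by simp [hd]
  rw [hs.apply i j, show x j * (A i j * x i) = x i * (A i j * x j) by ring,
    CharTwo.add_self_eq_zero]

lemma eq_zero_or_eq_two_of_two_mul_eq_zero {v : ZMod 4} (h : 2 * v = 0) : v = 0 ∨ v = 2 := by
  revert v; decide

section QuadraticForm

variable {m : ℕ} {P : Matrix (Fin m) (Fin m) (ZMod 2)}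

lemma qform_zero : qform P 0 = 0 := by simp [qform, lift2]

lemma two_mul_qform (x : Fin m → ZMod 2) : 2 * qform P x = twoMulLift (x ⬝ᵥ (P *ᵥ x)) := by
  have key : ∀ u p v : ZMod 2, 2 * (lift2 u * lift2 p * lift2 v) = twoMulLift (u * (p * v)) := by
    decide
  simp only [qform, dotProduct, mulVec, Finset.mul_sum, map_sum, key]

lemma two_mul_qform_eq_zero (hs : P.IsSymm) (hd : ∀ i, P i i = 0) (x : Fin m → ZMod 2) :
    2 * qform P x = 0 := by
  rw [two_mul_qform, dotProduct_mulVec_self_eq_zero hs hd, map_zero]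

lemma qform_add (hs : P.IsSymm) (x z : Fin m → ZMod 2) :
    qform P (x + z) = qform P x + qform P z + twoMulLift (x ⬝ᵥ (P *ᵥ z)) := by
  let d (x₁ z₁ p x₂ z₂ : ZMod 2) : ZMod 4 := lift2 (x₁ + z₁) * lift2 p * lift2 (x₂ + z₂)
    - lift2 x₁ * lift2 p * lift2 x₂ - lift2 z₁ * lift2 p * lift2 z₂ - twoMulLift (x₁ * (p * z₂))
  have hswap : ∀ x₁ z₁ p x₂ z₂, d x₁ z₁ p x₂ z₂ + d x₂ z₂ p x₁ z₁ = 0 := by decide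
  have hdiag : ∀ x₁ z₁ p, d x₁ z₁ p x₁ z₁ = 0 := by decide
  rw [← sub_eq_zero]
  calc _ = ∑ i, ∑ j, d (x i) (z i) (P i j) (x j) (z j) := by
        simp only [d, qform, dotProduct, mulVec, Finset.mul_sum, map_sum, Finset.sum_sub_distrib,
          Pi.add_apply]
        abel
    _ = 0 := sum_sum_eq_zero_of_add_swap _ (fun i j => by rw [hs.apply i j]; exact hswap ..)
        fun i => hdiag ..

lemma sum_zeta_qform_sq (hs : P.IsSymm) (hd : ∀ i, P i i = 0) :
    (∑ x, zeta (qform P x)) ^ 2 = 2 ^ m * ∑ z with P *ᵥ z = 0, zeta (qform P z) := by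
  have hsq : ∀ x, zeta (qform P x) * zeta (qform P x) = 1 := fun x => by
    rw [← zeta_add, ← two_mul, two_mul_qform_eq_zero hs hd, zeta_zero]
  calc (∑ x, zeta (qform P x)) ^ 2 = ∑ x, ∑ z, zeta (qform P x) * zeta (qform P (x + z)) := by
        rw [sq, Finset.sum_mul_sum]
        exact Finset.sum_congr rfl fun x _ =>
          (Fintype.sum_equiv (Equiv.addLeft x) _ _ fun _ => rfl).symm
    _ = ∑ z, zeta (qform P z) * ∑ x, zeta (twoMulLift (x ⬝ᵥ (P *ᵥ z))) := by
        rw [Finset.sum_comm]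
        refine Finset.sum_congr rfl fun z _ => ?_
        rw [Finset.mul_sum]
        refine Finset.sum_congr rfl fun x _ => ?_
        rw [qform_add hs, zeta_add, zeta_add, ← mul_assoc, ← mul_assoc, hsq, one_mul]
    _ = _ := by simp [sum_zeta_twoMulLift_dotProduct, Finset.sum_filter, Finset.mul_sum, mul_comm]

end QuadraticForm

section CharTwoField

variable {K : Type*} [Field K] [Algebra (ZMod 2) K]

local notation "Tr" => Algebra.trace (ZMod 2) K

local instance : CharP K 2 := charP_of_injective_algebraMap' (ZMod 2) 2

/-- The bilinear form of `P¹(a)` on `K`, curried in its first argument. -/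
def frobTraceForm (a x : K) : K →ₗ[ZMod 2] ZMod 2 :=
  Tr ∘ₗ (LinearMap.mulLeft (ZMod 2) (x * a) ∘ₗ (FiniteField.frobeniusAlgHom (ZMod 2) K).toLinearMap
    + LinearMap.mulLeft (ZMod 2) (x ^ 2 * a))

lemma frobTraceForm_apply (a x y : K) :
    frobTraceForm a x y = Tr ((x * y ^ 2 + x ^ 2 * y) * a) := by
  simp only [frobTraceForm, LinearMap.comp_apply, LinearMap.add_apply, LinearMap.mulLeft_apply,
    AlgHom.toLinearMap_apply, FiniteField.frobeniusAlgHom_apply, ZMod.card]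
  ring_nf

lemma frobTraceForm_comm (a x y : K) : frobTraceForm a x y = frobTraceForm a y x := by
  rw [frobTraceForm_apply, frobTraceForm_apply, add_comm (x * y ^ 2), mul_comm x, mul_comm (x ^ 2)]

lemma frobTraceForm_self (a x : K) : frobTraceForm a x x = 0 := by
  rw [frobTraceForm_apply, mul_comm x, CharTwo.add_self_eq_zero, zero_mul, map_zero]

variable [Finite K]

lemma trace_sq (x : K) : Tr (x ^ 2) = Tr x := by
  have := Fintype.ofFinite K
  simpa [ZMod.card] using
    Algebra.trace_eq_of_algEquiv (FiniteField.frobeniusAlgEquivOfAlgebraic (ZMod 2) K) x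

lemma exists_sq_eq (u : K) : ∃ e : K, e ^ 2 = u := by
  have := Fintype.ofFinite K
  simpa [ZMod.card] using (FiniteField.frobeniusAlgEquivOfAlgebraic (ZMod 2) K).surjective u

lemma eq_zero_of_forall_trace_mul_eq_zero {u : K} (h : ∀ x, Tr (u * x) = 0) : u = 0 :=
  (traceForm_nondegenerate (ZMod 2) K).1 u fun x => by simpa using h x

lemma frobTraceForm_eq_zero_iff {a : K} (ha : a ≠ 0) (w : K) :
    frobTraceForm a w = 0 ↔ w = 0 ∨ w ^ 3 * a = 1 := by
  obtain ⟨e, he⟩ := exists_sq_eq (w * a)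
  -- With `e = √(w a)`, `Tr (x² w a) = Tr ((x e)²) = Tr (x e)` is linear in `x`.
  have hform : ∀ x, frobTraceForm a w x = Tr ((w ^ 2 * a + e) * x) := fun x => by
    rw [show (w ^ 2 * a + e) * x = x * w ^ 2 * a + x * e by ring, map_add, ← trace_sq (x * e),
      mul_pow, he, ← map_add, frobTraceForm_apply]
    ring_nf
  calc frobTraceForm a w = 0 ↔ w ^ 2 * a + e = 0 := by
        refine ⟨fun h => eq_zero_of_forall_trace_mul_eq_zero fun x => ?_, fun h => ?_⟩
        · rw [← hform, h, LinearMap.zero_apply]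
        · ext x; rw [hform, h, zero_mul, map_zero, LinearMap.zero_apply]
    _ ↔ (w * a) * (w ^ 3 * a) = w * a := by
        rw [CharTwo.add_eq_zero, ← (frobenius_inj K 2).eq_iff, frobenius_def, frobenius_def, he]
        constructor <;> intro h <;> linear_combination h
    _ ↔ w = 0 ∨ w ^ 3 * a = 1 := by
        rw [mul_right_eq_self₀, mul_eq_zero, or_iff_left ha, or_comm]

end CharTwoField

lemma existsUnique_pow_mul_eq_one {K : Type*} [Field K] {n : ℕ} (hn₀ : n ≠ 0)
    (hn : (Nat.card Kˣ).Coprime n) {a : K} (ha : a ≠ 0) : ∃! w : K, w ^ n * a = 1 := by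
  obtain ⟨u, hu, huniq⟩ := (powCoprime hn).bijective.existsUnique (Units.mk0 a ha)⁻¹
  have hu' : (u : K) ^ n = a⁻¹ := by simpa using congrArg Units.val hu
  refine ⟨u, by simp only [hu', inv_mul_cancel₀ ha], fun w hw => ?_⟩
  have hw₀ : w ≠ 0 := by rintro rfl; simp [hn₀] at hw
  exact congrArg Units.val
    (huniq (Units.mk0 w hw₀) (Units.ext (by simpa using eq_inv_of_mul_eq_one_left hw)))

lemma coprime_card_units_galoisField_three {m : ℕ} (hm : Odd m) :
    (Nat.card (GaloisField 2 m)ˣ).Coprime 3 := by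
  rw [Nat.card_units, GaloisField.card 2 m (by rintro rfl; simp at hm),
    Nat.coprime_comm, Nat.Prime.coprime_iff_not_dvd Nat.prime_three]
  obtain ⟨k, rfl⟩ := hm
  have h4 : 4 ^ k % 3 = 1 := by rw [Nat.pow_mod]; norm_num
  have : 2 ^ (2 * k + 1) = 4 ^ k * 2 := by rw [pow_succ, pow_mul]; norm_num
  rw [this]
  omega

def powBasis {m : ℕ} {ξ : GaloisField 2 m} (hm : m ≠ 0)
    (hξ : LinearIndependent (ZMod 2) fun j : Fin m => ξ ^ (j : ℕ)) :
    Module.Basis (Fin m) (ZMod 2) (GaloisField 2 m) :=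
  haveI : NeZero m := ⟨hm⟩
  basisOfLinearIndependentOfCardEqFinrank hξ (by rw [Fintype.card_fin, GaloisField.finrank 2 hm])

section Pmat

variable {m : ℕ} (ξ a : GaloisField 2 m)

lemma Pmat_one_apply (i j : Fin m) :
    Pmat ξ 1 a i j = frobTraceForm a (ξ ^ (i : ℕ)) (ξ ^ (j : ℕ)) := by
  simp [Pmat, tr, frobTraceForm_apply]

lemma Pmat_one_isSymm : (Pmat ξ 1 a).IsSymm :=
  Matrix.IsSymm.ext fun i j => by rw [Pmat_one_apply, Pmat_one_apply, frobTraceForm_comm]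

lemma Pmat_one_apply_self (i : Fin m) : Pmat ξ 1 a i i = 0 := by
  rw [Pmat_one_apply, frobTraceForm_self]

lemma Pmat_one_mulVec (z : Fin m → ZMod 2) (i : Fin m) :
    (Pmat ξ 1 a *ᵥ z) i = frobTraceForm a (ξ ^ (i : ℕ)) (fld ξ z) := by
  simp [mulVec, dotProduct, fld, map_sum, Pmat_one_apply, mul_comm]

variable {ξ} (hm : m ≠ 0) (hξ : LinearIndependent (ZMod 2) fun j : Fin m => ξ ^ (j : ℕ))
include hm hξ

lemma powBasis_apply (i : Fin m) : powBasis hm hξ i = ξ ^ (i : ℕ) := by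
  simp [powBasis]

lemma fld_eq_powBasis_equivFun_symm : fld ξ = (powBasis hm hξ).equivFun.symm := by
  ext z
  simp [fld, Module.Basis.equivFun_symm_apply, powBasis_apply]

lemma Pmat_one_mulVec_eq_zero_iff (z : Fin m → ZMod 2) :
    Pmat ξ 1 a *ᵥ z = 0 ↔ frobTraceForm a (fld ξ z) = 0 := by
  simp only [funext_iff, Pi.zero_apply, Pmat_one_mulVec, frobTraceForm_comm a (ξ ^ _)]
  refine ⟨fun h => (powBasis hm hξ).ext fun i => ?_, fun h i => by simp [h]⟩
  simpa [powBasis_apply] using h i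

end Pmat

lemma exists_ker_Pmat_one_eq_pair {m : ℕ} (hm : Odd m) {ξ : GaloisField 2 m}
    (hξ : LinearIndependent (ZMod 2) fun j : Fin m => ξ ^ (j : ℕ)) {a : GaloisField 2 m}
    (ha : a ≠ 0) : ∃ v₀ ≠ 0, ∀ z, Pmat ξ 1 a *ᵥ z = 0 ↔ z = 0 ∨ z = v₀ := by
  have hm₀ : m ≠ 0 := by rintro rfl; simp at hm
  obtain ⟨w₀, hw₀, huniq⟩ :=
    existsUnique_pow_mul_eq_one three_ne_zero (coprime_card_units_galoisField_three hm) ha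
  let e := (powBasis hm₀ hξ).equivFun
  have hw₀ne : w₀ ≠ 0 := by rintro rfl; simp at hw₀
  refine ⟨e w₀, by simpa using hw₀ne, fun z => ?_⟩
  rw [Pmat_one_mulVec_eq_zero_iff a hm₀ hξ, frobTraceForm_eq_zero_iff ha,
    fld_eq_powBasis_equivFun_symm hm₀ hξ, LinearEquiv.map_eq_zero_iff,
    ← LinearEquiv.symm_apply_eq]
  exact or_congr_right ⟨huniq _, fun h => h ▸ hw₀⟩

lemma sum_zeta_eq_card_sub {α : Type*} [Fintype α] (f : α → ZMod 4) (hf : ∀ x, 2 * f x = 0) :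
    ∑ x, zeta (f x) = ((Fintype.card α - 2 * {x | f x = 2}.ncard : ℤ) : ℂ) := by
  have hval : ∀ x, zeta (f x) = 1 - 2 * if f x = 2 then 1 else 0 := fun x => by
    obtain h | h := eq_zero_or_eq_two_of_two_mul_eq_zero (hf x)
    · simp [h, zeta_zero, show (0 : ZMod 4) ≠ 2 by decide]
    · rw [if_pos h, h, zeta_two]; norm_num
  rw [Finset.sum_congr rfl fun x _ => hval x, Finset.sum_sub_distrib, ← Finset.mul_sum,
    Finset.sum_boole, Set.ncard_eq_toFinset_card']
  simp

lemma mem_weights_of_sq {m N : ℕ} (hm : Odd m)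
    (h : ((2 : ℤ) ^ m - 2 * N) ^ 2 = 0 ∨ ((2 : ℤ) ^ m - 2 * N) ^ 2 = 2 ^ (m + 1)) :
    N ∈ ({2 ^ (m - 1) - 2 ^ ((m - 1) / 2), 2 ^ (m - 1),
      2 ^ (m - 1) + 2 ^ ((m - 1) / 2)} : Set ℕ) := by
  obtain ⟨k, rfl⟩ := hm
  simp only [Nat.add_sub_cancel, Nat.mul_div_cancel_left k two_pos, Set.mem_insert_iff,
    Set.mem_singleton_iff]
  have hle : 2 ^ k ≤ 2 ^ (2 * k) := Nat.pow_le_pow_right two_pos (by omega)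
  zify [hle]
  set t : ℤ := 2 ^ k
  have ht : (2 : ℤ) ^ (2 * k) = t ^ 2 := by rw [pow_mul']
  rw [ht]
  rw [show (2 : ℤ) ^ (2 * k + 1) - 2 * N = 2 * (t ^ 2 - N) by rw [pow_succ, ht]; ring,
    show (2 : ℤ) ^ (2 * k + 1 + 1) = (2 * t) ^ 2 by rw [pow_succ, pow_succ, ht]; ring] at h
  rcases h with h | h
  · right; left; linarith [pow_eq_zero_iff (n := 2) two_ne_zero |>.mp h]
  · rcases sq_eq_sq_iff_eq_or_eq_neg.mp h with h | h
    · left; linarith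
    · right; right; linarith

/-- For odd `m` and nonzero `a ∈ GF(2^m)`, the weight
`w_a = #{x ∈ 𝔽₂^m : x P¹(a) xᵀ ≡ 2 (mod 4)}` lies in
`{2^{m-1} − 2^{(m-1)/2}, 2^{m-1}, 2^{m-1} + 2^{(m-1)/2}}`; equivalently the character
sum `S_a = ∑_x i^{x P¹(a) xᵀ}` satisfies `S_a² ∈ {0, 2^{m+1}}`. -/
theorem dg01_codeword_weights
    (m : ℕ) (hm : Odd m)
    (ξ : GaloisField 2 m)
    (hξ : LinearIndependent (ZMod 2) fun j : Fin m => ξ ^ (j : ℕ))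
    (a : GaloisField 2 m) (ha : a ≠ 0) :
    ({x : Fin m → ZMod 2 | qform (Pmat ξ 1 a) x = 2}.ncard ∈
        ({2 ^ (m - 1) - 2 ^ ((m - 1) / 2), 2 ^ (m - 1),
          2 ^ (m - 1) + 2 ^ ((m - 1) / 2)} : Set ℕ)) ∧
      (∑ x : Fin m → ZMod 2, zeta (qform (Pmat ξ 1 a) x)) ^ 2 ∈
        ({0, 2 ^ (m + 1)} : Set ℂ) := by
  have hs := Pmat_one_isSymm ξ a
  have hd := Pmat_one_apply_self ξ a
  obtain ⟨v₀, hv₀, hker⟩ := exists_ker_Pmat_one_eq_pair hm hξ ha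
  have hker' : Finset.univ.filter (fun z => Pmat ξ 1 a *ᵥ z = 0) = {0, v₀} := by
    ext z; simp [hker]
  have hS : (∑ x, zeta (qform (Pmat ξ 1 a) x)) ^ 2 = 0 ∨
      (∑ x, zeta (qform (Pmat ξ 1 a) x)) ^ 2 = 2 ^ (m + 1) := by
    rw [sum_zeta_qform_sq hs hd, hker', Finset.sum_pair hv₀.symm]
    obtain h | h := eq_zero_or_eq_two_of_two_mul_eq_zero (two_mul_qform_eq_zero hs hd v₀) <;>
      norm_num [h, qform_zero, zeta_zero, zeta_two, pow_succ]
  refine ⟨mem_weights_of_sq hm ?_, hS⟩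
  rw [sum_zeta_eq_card_sub _ (two_mul_qform_eq_zero hs hd), Fintype.card_fun, ZMod.card,
    Fintype.card_fin] at hS
  exact_mod_cast hS
end DGPaper
end
end
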